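/- Let H = (X ∪ Y ∪ Z, F) be a tripartite 3-uniform hypergraph with |X| = |Y| = |Z| = n and |F| = m, and let G_H be the 4-layer graph constructed from H by the reduction. If M is an IV-matching of G_H, then the number of hyperedges e ∈ F whose vertices x_e, y_e, z_e are all covered by V-shapes in M (equivalently, the number of vertices of V₃ matched to two vertices of V₂) is exactly m − n, and the number of hyperedges whose vertices x_e, y_e, z_e are all covered by I-shapes is exactly n. -/
import Mathlib


/-!
The reduction from 3-Dimensional Matching to the IV-matching problem
(Folwarczný–Knop).  The tripartite 3-uniform hypergraph `H` has pairwise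
disjoint vertex classes `X`, `Y`, `Z` (modeled as separate types) and
hyperedge set `F ⊆ X × Y × Z`.  The reduction graph `G_H` has vertex type
`RVtx F` with four layers `L1 = X ∪ Y`, `L2 = {x_e, y_e : e ∈ F}`,
`L3 = {z_e : e ∈ F}`, `L4 = Z`, and edge set `GHedges F`.
-/

set_option maxHeartbeats 1000000
set_option synthInstance.maxSize 512

open Finset

variable {X Y Z : Type*} [DecidableEq X] [DecidableEq Y] [DecidableEq Z]
  [Fintype X] [Fintype Y] [Fintype Z]

/-- Vertex type of the reduction graph `G_H`. -/
abbrev RVtx (F : Finset (X × Y × Z)) : Type _ :=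
  (X ⊕ Y) ⊕ (({e // e ∈ F} × Bool) ⊕ ({e // e ∈ F} ⊕ Z))

variable (F : Finset (X × Y × Z))

instance instDecEqRVtx : DecidableEq (RVtx F) :=
  fun a b => inferInstanceAs (Decidable (a = b))

instance instFintypeRVtx : Fintype (RVtx F) :=
  inferInstanceAs (Fintype ((X ⊕ Y) ⊕ (({e // e ∈ F} × Bool) ⊕ ({e // e ∈ F} ⊕ Z))))

/-- The vertex `x` of a hyperedge `e = ⟨x, y, z⟩`, viewed in layer `V₁`. -/
def xV (e : {e // e ∈ F}) : RVtx F := Sum.inl (Sum.inl e.1.1)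

/-- The vertex `y` of a hyperedge `e = ⟨x, y, z⟩`, viewed in layer `V₁`. -/
def yV (e : {e // e ∈ F}) : RVtx F := Sum.inl (Sum.inr e.1.2.1)

/-- The vertex `z` of a hyperedge `e = ⟨x, y, z⟩`, viewed in layer `V₄`. -/
def zV (e : {e // e ∈ F}) : RVtx F := Sum.inr (Sum.inr (Sum.inr e.1.2.2))

/-- The new vertex `x_e` of layer `V₂` associated with a hyperedge `e`. -/
def xE (e : {e // e ∈ F}) : RVtx F := Sum.inr (Sum.inl (e, false))

/-- The new vertex `y_e` of layer `V₂` associated with a hyperedge `e`. -/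
def yE (e : {e // e ∈ F}) : RVtx F := Sum.inr (Sum.inl (e, true))

/-- The new vertex `z_e` of layer `V₃` associated with a hyperedge `e`. -/
def zE (e : {e // e ∈ F}) : RVtx F := Sum.inr (Sum.inr (Sum.inl e))

/-- Layer `V₁ = X ∪ Y` of `G_H`. -/
def L1 : Finset (RVtx F) := Finset.univ.image fun a : X ⊕ Y => (Sum.inl a : RVtx F)

/-- Layer `V₂ = {x_e, y_e : e ∈ F}` of `G_H`. -/
def L2 : Finset (RVtx F) :=
  Finset.univ.image fun p : {e // e ∈ F} × Bool => (Sum.inr (Sum.inl p) : RVtx F)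

/-- Layer `V₃ = {z_e : e ∈ F}` of `G_H`. -/
def L3 : Finset (RVtx F) :=
  Finset.univ.image fun e : {e // e ∈ F} => (Sum.inr (Sum.inr (Sum.inl e)) : RVtx F)

/-- Layer `V₄ = Z` of `G_H`. -/
def L4 : Finset (RVtx F) :=
  Finset.univ.image fun z : Z => (Sum.inr (Sum.inr (Sum.inr z)) : RVtx F)

/-- The edges of the reduction graph `G_H`: for each hyperedge `e = ⟨x, y, z⟩`
the edges `{x, x_e}, {x, y_e}, {y, x_e}, {y, y_e}, {x_e, z_e}, {y_e, z_e}, {z_e, z}`. -/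
def GHedges : Finset (Sym2 (RVtx F)) :=
  Finset.univ.biUnion fun e : {e // e ∈ F} =>
    { s(xV F e, xE F e), s(xV F e, yE F e), s(yV F e, xE F e), s(yV F e, yE F e),
      s(xE F e, zE F e), s(yE F e, zE F e), s(zE F e, zV F e) }

/-- `M` is an IV-matching of the 4-layer graph with layers `V1, V2, V3, V4` and
edge set `E`: it is a set of edges of the graph such that every vertex of `V1` is
incident in `M` to exactly one vertex of `V2`; every vertex of `V2` is incident in
`M` to exactly one vertex of `V1 ∪ V3`; every vertex of `V3` is incident in `M`
either to exactly two vertices of `V2` and no vertex of `V4`, or to exactly one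
vertex of `V4` and no vertex of `V2`; and every vertex of `V4` is incident in `M`
to exactly one vertex of `V3`. -/
def IVMatching {V : Type*} [DecidableEq V] (V1 V2 V3 V4 : Finset V)
    (E M : Finset (Sym2 V)) : Prop :=
  M ⊆ E ∧
  (∀ v ∈ V1, (V2.filter fun w => s(v, w) ∈ M).card = 1) ∧
  (∀ v ∈ V2, ((V1 ∪ V3).filter fun w => s(v, w) ∈ M).card = 1) ∧
  (∀ v ∈ V3,
    ((V2.filter fun w => s(v, w) ∈ M).card = 2 ∧ (V4.filter fun w => s(v, w) ∈ M).card = 0) ∨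
    ((V4.filter fun w => s(v, w) ∈ M).card = 1 ∧ (V2.filter fun w => s(v, w) ∈ M).card = 0)) ∧
  (∀ v ∈ V4, (V3.filter fun w => s(v, w) ∈ M).card = 1)

/-- `N` is a perfect matching of the tripartite hypergraph `H = (X ∪ Y ∪ Z, F)`:
a set of pairwise disjoint hyperedges of `F` covering every vertex. -/
def HPerfectMatching (N : Finset (X × Y × Z)) : Prop :=
  N ⊆ F ∧
  (∀ e ∈ N, ∀ f ∈ N, e ≠ f → e.1 ≠ f.1 ∧ e.2.1 ≠ f.2.1 ∧ e.2.2 ≠ f.2.2) ∧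
  (∀ x : X, ∃ e ∈ N, e.1 = x) ∧
  (∀ y : Y, ∃ e ∈ N, e.2.1 = y) ∧
  (∀ z : Z, ∃ e ∈ N, e.2.2 = z)


section IVHelpers

set_option linter.unusedSectionVars false

lemma mem_GHedges_iff (s : Sym2 (RVtx F)) :
    s ∈ GHedges F ↔ ∃ e : {e // e ∈ F},
      s = s(xV F e, xE F e) ∨ s = s(xV F e, yE F e) ∨ s = s(yV F e, xE F e) ∨
      s = s(yV F e, yE F e) ∨ s = s(xE F e, zE F e) ∨ s = s(yE F e, zE F e) ∨
      s = s(zE F e, zV F e) := by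
  simp [GHedges, mem_biUnion, mem_insert, mem_singleton]

lemma zE_adj {e : {e // e ∈ F}} {w : RVtx F} (h : s(zE F e, w) ∈ GHedges F) :
    w = xE F e ∨ w = yE F e ∨ w = zV F e := by
  rw [mem_GHedges_iff] at h
  obtain ⟨f, hf⟩ := h
  rcases hf with h|h|h|h|h|h|h <;>
    rw [Sym2.eq_iff] at h <;>
    rcases h with ⟨h1, h2⟩ | ⟨h1, h2⟩ <;>
    simp_all [xV, yV, zV, xE, yE, zE]

lemma xE_adj {e : {e // e ∈ F}} {w : RVtx F} (h : s(xE F e, w) ∈ GHedges F) :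
    w = xV F e ∨ w = yV F e ∨ w = zE F e := by
  rw [mem_GHedges_iff] at h
  obtain ⟨f, hf⟩ := h
  rcases hf with h|h|h|h|h|h|h <;>
    rw [Sym2.eq_iff] at h <;>
    rcases h with ⟨h1, h2⟩ | ⟨h1, h2⟩ <;>
    simp_all [xV, yV, zV, xE, yE, zE]

lemma yE_adj {e : {e // e ∈ F}} {w : RVtx F} (h : s(yE F e, w) ∈ GHedges F) :
    w = xV F e ∨ w = yV F e ∨ w = zE F e := by
  rw [mem_GHedges_iff] at h
  obtain ⟨f, hf⟩ := h
  rcases hf with h|h|h|h|h|h|h <;>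
    rw [Sym2.eq_iff] at h <;>
    rcases h with ⟨h1, h2⟩ | ⟨h1, h2⟩ <;>
    simp_all [xV, yV, zV, xE, yE, zE]

set_option linter.unusedSectionVars false

lemma xE_mem_L2 (e : {e // e ∈ F}) : xE F e ∈ L2 F := by
  simp [L2, xE]
lemma yE_mem_L2 (e : {e // e ∈ F}) : yE F e ∈ L2 F := by
  simp [L2, yE]
lemma zE_mem_L3 (e : {e // e ∈ F}) : zE F e ∈ L3 F := by
  simp [L3, zE]
lemma zV_mem_L4 (e : {e // e ∈ F}) : zV F e ∈ L4 F := by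
  simp [L4, zV]
lemma xV_mem_L1 (e : {e // e ∈ F}) : xV F e ∈ L1 F := by
  simp [L1, xV]
lemma yV_mem_L1 (e : {e // e ∈ F}) : yV F e ∈ L1 F := by
  simp [L1, yV]
lemma zE_injF : Function.Injective (zE F) := by
  intro a b h; simpa [zE] using h
lemma xE_ne_yE (e : {e // e ∈ F}) : xE F e ≠ yE F e := by simp [xE, yE]

variable {F} {M : Finset (Sym2 (RVtx F))} (hsub : M ⊆ GHedges F)

include hsub

lemma L2filter_zE (e : {e // e ∈ F}) :
    (L2 F).filter (fun w => s(zE F e, w) ∈ M) =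
      ({xE F e, yE F e} : Finset (RVtx F)).filter (fun w => s(zE F e, w) ∈ M) := by
  ext w
  simp only [mem_filter, mem_insert, mem_singleton]
  constructor
  · rintro ⟨hw2, hm⟩
    refine ⟨?_, hm⟩
    rcases zE_adj F (hsub hm) with h|h|h
    · exact Or.inl h
    · exact Or.inr h
    · exfalso; subst h; simp [L2, zV] at hw2
  · rintro ⟨hw, hm⟩
    refine ⟨?_, hm⟩
    rcases hw with h|h
    · subst h; exact xE_mem_L2 F e
    · subst h; exact yE_mem_L2 F e

lemma card2_iff (e : {e // e ∈ F}) :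
    ((L2 F).filter fun w => s(zE F e, w) ∈ M).card = 2 ↔
      (s(xE F e, zE F e) ∈ M ∧ s(yE F e, zE F e) ∈ M) := by
  rw [L2filter_zE hsub]
  have hx : s(zE F e, xE F e) = s(xE F e, zE F e) := Sym2.eq_swap
  have hy : s(zE F e, yE F e) = s(yE F e, zE F e) := Sym2.eq_swap
  by_cases h1 : s(xE F e, zE F e) ∈ M <;> by_cases h2 : s(yE F e, zE F e) ∈ M <;>
    simp [filter_insert, filter_singleton, hx, hy, h1, h2, xE_ne_yE F e]

lemma card0_iff (e : {e // e ∈ F}) :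
    ((L2 F).filter fun w => s(zE F e, w) ∈ M).card = 0 ↔
      (s(xE F e, zE F e) ∉ M ∧ s(yE F e, zE F e) ∉ M) := by
  rw [L2filter_zE hsub]
  have hx : s(zE F e, xE F e) = s(xE F e, zE F e) := Sym2.eq_swap
  have hy : s(zE F e, yE F e) = s(yE F e, zE F e) := Sym2.eq_swap
  by_cases h1 : s(xE F e, zE F e) ∈ M <;> by_cases h2 : s(yE F e, zE F e) ∈ M <;>
    simp [filter_insert, filter_singleton, hx, hy, h1, h2, xE_ne_yE F e]

lemma existsL4_iff (e : {e // e ∈ F}) :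
    (∃ w ∈ L4 F, s(zE F e, w) ∈ M) ↔ s(zE F e, zV F e) ∈ M := by
  constructor
  · rintro ⟨w, hw4, hm⟩
    rcases zE_adj F (hsub hm) with h|h|h
    · exfalso; subst h; simp [L4, xE] at hw4
    · exfalso; subst h; simp [L4, yE] at hw4
    · subst h; exact hm
  · intro h; exact ⟨zV F e, zV_mem_L4 F e, h⟩

variable (hM2 : ∀ v ∈ L2 F, ((L1 F ∪ L3 F).filter fun w => s(v, w) ∈ M).card = 1)

include hM2

lemma existsL1_xE_of_V (e : {e // e ∈ F}) (hA : s(xE F e, zE F e) ∈ M) :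
    ¬ ∃ w ∈ L1 F, s(xE F e, w) ∈ M := by
  rintro ⟨w, hw1, hwm⟩
  have h1 := hM2 (xE F e) (xE_mem_L2 F e)
  have hz : zE F e ∈ (L1 F ∪ L3 F).filter fun w => s(xE F e, w) ∈ M := by
    simp only [mem_filter, mem_union]
    exact ⟨Or.inr (zE_mem_L3 F e), hA⟩
  have hw : w ∈ (L1 F ∪ L3 F).filter fun w => s(xE F e, w) ∈ M := by
    simp only [mem_filter, mem_union]
    exact ⟨Or.inl hw1, hwm⟩
  have hne : w ≠ zE F e := by
    intro h; subst h; simp [L1, zE] at hw1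
  have hss : ({w, zE F e} : Finset (RVtx F)) ⊆
      (L1 F ∪ L3 F).filter (fun u => s(xE F e, u) ∈ M) := by
    intro v hv
    rcases mem_insert.1 hv with h|h
    · subst h; exact hw
    · rw [mem_singleton] at h; subst h; exact hz
  have hle := card_le_card hss
  rw [h1, card_insert_of_notMem (by simpa using hne), card_singleton] at hle
  omega

lemma existsL1_yE_of_V (e : {e // e ∈ F}) (hA : s(yE F e, zE F e) ∈ M) :
    ¬ ∃ w ∈ L1 F, s(yE F e, w) ∈ M := by
  rintro ⟨w, hw1, hwm⟩
  have h1 := hM2 (yE F e) (yE_mem_L2 F e)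
  have hz : zE F e ∈ (L1 F ∪ L3 F).filter fun w => s(yE F e, w) ∈ M := by
    simp only [mem_filter, mem_union]
    exact ⟨Or.inr (zE_mem_L3 F e), hA⟩
  have hw : w ∈ (L1 F ∪ L3 F).filter fun w => s(yE F e, w) ∈ M := by
    simp only [mem_filter, mem_union]
    exact ⟨Or.inl hw1, hwm⟩
  have hne : w ≠ zE F e := by
    intro h; subst h; simp [L1, zE] at hw1
  have hss : ({w, zE F e} : Finset (RVtx F)) ⊆
      (L1 F ∪ L3 F).filter (fun u => s(yE F e, u) ∈ M) := by
    intro v hv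
    rcases mem_insert.1 hv with h|h
    · subst h; exact hw
    · rw [mem_singleton] at h; subst h; exact hz
  have hle := card_le_card hss
  rw [h1, card_insert_of_notMem (by simpa using hne), card_singleton] at hle
  omega

lemma existsL1_xE_of_I (e : {e // e ∈ F}) (hA : s(xE F e, zE F e) ∉ M) :
    ∃ w ∈ L1 F, s(xE F e, w) ∈ M := by
  have h1 := hM2 (xE F e) (xE_mem_L2 F e)
  have hne : ((L1 F ∪ L3 F).filter fun w => s(xE F e, w) ∈ M).Nonempty := by
    rw [← card_pos, h1]; norm_num
  obtain ⟨w, hw⟩ := hne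
  simp only [mem_filter, mem_union] at hw
  obtain ⟨_, hwm⟩ := hw
  rcases xE_adj F (hsub hwm) with h|h|h
  · exact ⟨w, h ▸ xV_mem_L1 F e, hwm⟩
  · exact ⟨w, h ▸ yV_mem_L1 F e, hwm⟩
  · exact absurd (h ▸ hwm) hA

lemma existsL1_yE_of_I (e : {e // e ∈ F}) (hA : s(yE F e, zE F e) ∉ M) :
    ∃ w ∈ L1 F, s(yE F e, w) ∈ M := by
  have h1 := hM2 (yE F e) (yE_mem_L2 F e)
  have hne : ((L1 F ∪ L3 F).filter fun w => s(yE F e, w) ∈ M).Nonempty := by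
    rw [← card_pos, h1]; norm_num
  obtain ⟨w, hw⟩ := hne
  simp only [mem_filter, mem_union] at hw
  obtain ⟨_, hwm⟩ := hw
  rcases yE_adj F (hsub hwm) with h|h|h
  · exact ⟨w, h ▸ xV_mem_L1 F e, hwm⟩
  · exact ⟨w, h ▸ yV_mem_L1 F e, hwm⟩
  · exact absurd (h ▸ hwm) hA

omit hsub hM2

theorem ivHelper (n m : ℕ)
    (hX : Fintype.card X = n) (hY : Fintype.card Y = n) (hZ : Fintype.card Z = n)
    (hF : F.card = m)
    (hM : M ⊆ GHedges F ∧
      (∀ v ∈ L1 F, ((L2 F).filter fun w => s(v, w) ∈ M).card = 1) ∧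
      (∀ v ∈ L2 F, ((L1 F ∪ L3 F).filter fun w => s(v, w) ∈ M).card = 1) ∧
      (∀ v ∈ L3 F,
        (((L2 F).filter fun w => s(v, w) ∈ M).card = 2 ∧ ((L4 F).filter fun w => s(v, w) ∈ M).card = 0) ∨
        (((L4 F).filter fun w => s(v, w) ∈ M).card = 1 ∧ ((L2 F).filter fun w => s(v, w) ∈ M).card = 0)) ∧
      (∀ v ∈ L4 F, ((L3 F).filter fun w => s(v, w) ∈ M).card = 1)) :
    (F.attach.filter fun e =>
        s(xE F e, zE F e) ∈ M ∧ s(yE F e, zE F e) ∈ M).card = m - n ∧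
    ((L3 F).filter fun v => ((L2 F).filter fun w => s(v, w) ∈ M).card = 2).card = m - n ∧
    (F.attach.filter fun e =>
        (∃ w ∈ L1 F, s(xE F e, w) ∈ M) ∧ (∃ w ∈ L1 F, s(yE F e, w) ∈ M) ∧
        (∃ w ∈ L4 F, s(zE F e, w) ∈ M)).card = n := by
  obtain ⟨hsub, hm1, hm2, hm3, hm4⟩ := hM
  -- the C condition is equivalent to the negation of the A condition
  have hCeq : ∀ e : {e // e ∈ F},
      ((∃ w ∈ L1 F, s(xE F e, w) ∈ M) ∧ (∃ w ∈ L1 F, s(yE F e, w) ∈ M) ∧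
        (∃ w ∈ L4 F, s(zE F e, w) ∈ M)) ↔
      ¬ (s(xE F e, zE F e) ∈ M ∧ s(yE F e, zE F e) ∈ M) := by
    intro e
    constructor
    · rintro ⟨hx, _, _⟩ ⟨ha, _⟩
      exact existsL1_xE_of_V hsub hm2 e ha hx
    · intro hnA
      rcases hm3 (zE F e) (zE_mem_L3 F e) with ⟨h2, _⟩ | ⟨h1, h0⟩
      · exact absurd ((card2_iff hsub e).1 h2) hnA
      · obtain ⟨hnx, hny⟩ := (card0_iff hsub e).1 h0
        refine ⟨existsL1_xE_of_I hsub hm2 e hnx, existsL1_yE_of_I hsub hm2 e hny, ?_⟩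
        have hne : ((L4 F).filter fun w => s(zE F e, w) ∈ M).Nonempty := by
          rw [← card_pos, h1]; norm_num
        obtain ⟨w, hw⟩ := hne
        simp only [mem_filter] at hw
        exact ⟨w, hw.1, hw.2⟩
  -- the number of I-shape hyperedges equals n
  have hCn : (F.attach.filter fun e =>
      (∃ w ∈ L1 F, s(xE F e, w) ∈ M) ∧ (∃ w ∈ L1 F, s(yE F e, w) ∈ M) ∧
      (∃ w ∈ L4 F, s(zE F e, w) ∈ M)).card = n := by
    rw [← hZ, ← card_univ]
    apply card_bij (fun (e : {e // e ∈ F}) _ => e.1.2.2)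
    · intro a _; exact mem_univ _
    · intro a ha b hb heq
      have hca := (mem_filter.1 ha).2
      have hcb := (mem_filter.1 hb).2
      have hza : s(zE F a, zV F a) ∈ M := (existsL4_iff hsub a).1 hca.2.2
      have hzb : s(zE F b, zV F b) ∈ M := (existsL4_iff hsub b).1 hcb.2.2
      have hvv : zV F b = zV F a := by simp [zV, heq]
      have h1 := hm4 (zV F a) (zV_mem_L4 F a)
      have hmema : zE F a ∈ (L3 F).filter fun w => s(zV F a, w) ∈ M := by
        refine mem_filter.2 ⟨zE_mem_L3 F a, ?_⟩
        rw [Sym2.eq_swap]; exact hza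
      have hmemb : zE F b ∈ (L3 F).filter fun w => s(zV F a, w) ∈ M := by
        refine mem_filter.2 ⟨zE_mem_L3 F b, ?_⟩
        rw [Sym2.eq_swap, ← hvv]; exact hzb
      have := card_le_one.1 (le_of_eq h1) _ hmema _ hmemb
      exact zE_injF F this
    · intro z _
      have h1 := hm4 (Sum.inr (Sum.inr (Sum.inr z)) : RVtx F) (by simp [L4])
      have hne : ((L3 F).filter fun w =>
          s((Sum.inr (Sum.inr (Sum.inr z)) : RVtx F), w) ∈ M).Nonempty := by
        rw [← card_pos, h1]; norm_num
      obtain ⟨w, hw⟩ := hne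
      rw [mem_filter] at hw
      obtain ⟨hw3, hwm⟩ := hw
      simp only [L3, mem_image, mem_univ, true_and] at hw3
      obtain ⟨f, hf⟩ := hw3
      have hwz : w = zE F f := hf ▸ rfl
      subst hwz
      have hwm' : s(zE F f, (Sum.inr (Sum.inr (Sum.inr z)) : RVtx F)) ∈ M := by
        rw [Sym2.eq_swap]; exact hwm
      have hv := zE_adj F (hsub hwm')
      rcases hv with h|h|h
      · exfalso; simp [xE] at h
      · exfalso; simp [yE] at h
      · have hfz : f.1.2.2 = z := by
          have := h.symm
          simp only [zV, Sum.inr.injEq] at this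
          exact this
        have hzv : s(zE F f, zV F f) ∈ M := by rw [h] at hwm'; exact hwm'
        have hnA : ¬ (s(xE F f, zE F f) ∈ M ∧ s(yE F f, zE F f) ∈ M) := by
          rcases hm3 (zE F f) (zE_mem_L3 F f) with ⟨_, h0⟩ | ⟨_, h0⟩
          · exfalso
            have hmem : zV F f ∈ (L4 F).filter fun w => s(zE F f, w) ∈ M :=
              mem_filter.2 ⟨zV_mem_L4 F f, hzv⟩
            rw [card_eq_zero] at h0
            rw [h0] at hmem
            exact absurd hmem (notMem_empty _)
          · exact fun hA => ((card0_iff hsub f).1 h0).1 hA.1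
        exact ⟨f, mem_filter.2 ⟨mem_attach _ _, (hCeq f).2 hnA⟩, hfz⟩
  -- counting: A-count + C-count = m
  have hsum : (F.attach.filter fun e =>
        s(xE F e, zE F e) ∈ M ∧ s(yE F e, zE F e) ∈ M).card +
      (F.attach.filter fun e =>
        (∃ w ∈ L1 F, s(xE F e, w) ∈ M) ∧ (∃ w ∈ L1 F, s(yE F e, w) ∈ M) ∧
        (∃ w ∈ L4 F, s(zE F e, w) ∈ M)).card = m := by
    have hcongr : (F.attach.filter fun e =>
        (∃ w ∈ L1 F, s(xE F e, w) ∈ M) ∧ (∃ w ∈ L1 F, s(yE F e, w) ∈ M) ∧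
        (∃ w ∈ L4 F, s(zE F e, w) ∈ M)) =
        F.attach.filter fun e => ¬ (s(xE F e, zE F e) ∈ M ∧ s(yE F e, zE F e) ∈ M) := by
      apply filter_congr
      intro e _
      simp only [hCeq e]
    rw [hcongr, card_filter_add_card_filter_not, card_attach, hF]
  have hAm : (F.attach.filter fun e =>
      s(xE F e, zE F e) ∈ M ∧ s(yE F e, zE F e) ∈ M).card = m - n := by omega
  refine ⟨hAm, ?_, hCn⟩
  -- the L3 count equals the A-count
  have hB : (F.attach.filter fun e =>
      s(xE F e, zE F e) ∈ M ∧ s(yE F e, zE F e) ∈ M).card =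
      ((L3 F).filter fun v => ((L2 F).filter fun w => s(v, w) ∈ M).card = 2).card := by
    apply card_bij (fun (e : {e // e ∈ F}) _ => zE F e)
    · intro a ha
      exact mem_filter.2 ⟨zE_mem_L3 F a, (card2_iff hsub a).2 (mem_filter.1 ha).2⟩
    · intro a _ b _ h; exact zE_injF F h
    · intro v hv
      rw [mem_filter] at hv
      obtain ⟨hv3, hv2⟩ := hv
      simp only [L3, mem_image, mem_univ, true_and] at hv3
      obtain ⟨f, hf⟩ := hv3
      have hvz : v = zE F f := hf ▸ rfl
      subst hvz
      exact ⟨f, mem_filter.2 ⟨mem_attach _ _, (card2_iff hsub f).1 hv2⟩, rfl⟩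
  rw [← hB, hAm]

end IVHelpers

theorem iv_matching_shape_counts {X Y Z : Type*} [DecidableEq X] [DecidableEq Y] [DecidableEq Z]
    [Fintype X] [Fintype Y] [Fintype Z] (n m : ℕ)
    (hX : Fintype.card X = n) (hY : Fintype.card Y = n) (hZ : Fintype.card Z = n)
    (F : Finset (X × Y × Z)) (hF : F.card = m)
    (M : Finset (Sym2 (RVtx F)))
    (hM : IVMatching (L1 F) (L2 F) (L3 F) (L4 F) (GHedges F) M) :
    (F.attach.filter fun e =>
        s(xE F e, zE F e) ∈ M ∧ s(yE F e, zE F e) ∈ M).card = m - n ∧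
    ((L3 F).filter fun v => ((L2 F).filter fun w => s(v, w) ∈ M).card = 2).card = m - n ∧
    (F.attach.filter fun e =>
        (∃ w ∈ L1 F, s(xE F e, w) ∈ M) ∧ (∃ w ∈ L1 F, s(yE F e, w) ∈ M) ∧
        (∃ w ∈ L4 F, s(zE F e, w) ∈ M)).card = n := by
  unfold IVMatching at hM
  exact ivHelper n m hX hY hZ hF hM
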